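/- arXiv:1207.1155 — 3 statements merged into one kernel-verified Lean document; each statement's English description precedes it below -/
import Mathlib

section
/- Let 0 < q < 1, let N ≥ 1 be an integer, let C > 0 and r > 0, and let h be a holomorphic function on the open disc D_r = {x ∈ ℂ : |x| < r} of the form h(x) = q·x·(1 + ρ(x)) with |ρ(x)| ≤ C|x|^N on D_r. Then there exists r' ∈ (0, r] such that h is injective on D_{r'}, h maps D_{r'} \ {0} into D_{r'} \ {0}, and every finite Borel measure μ on D_{r'} \ {0} satisfying μ(h(A)) = μ(A) for every Borel set A ⊆ D_{r'} \ {0} is the zero measure. -/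
/-!
Since `h x = q x (1 + ρ x)` with `ρ → 0`, we have `h' 0 = q ≠ 0`, so by the inverse function
theorem `h` is injective near `0`, and it contracts: `‖h x‖ ≤ κ ‖x‖` for some `κ < 1`. On a
small punctured disc `S`, let `U n ⊆ S` be the punctured disc of radius `κ ^ n r'`. Then
`h (U n) ⊆ U (n + 1)`, so invariance gives `μ (U n) ≤ μ (U (n + 1))`: the measures of the
decreasing sets `U n` are constant, yet they tend to `μ (⋂ U n) = μ ∅ = 0`. Hence `μ S = 0`.
-/

open MeasureTheory Metric Filter Set Topology

theorem MeasureTheory.measure_eq_zero_of_le_measure_succ {α : Type*} [MeasurableSpace α]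
    {μ : Measure α} [IsFiniteMeasure μ] {U : ℕ → Set α} (hU : ∀ n, NullMeasurableSet (U n) μ)
    (hanti : Antitone U) (hempty : ⋂ n, U n = ∅) (hle : ∀ n, μ (U n) ≤ μ (U (n + 1))) :
    μ (U 0) = 0 := by
  have hconst : ∀ n, μ (U n) = μ (U 0) := fun n => by
    induction n with
    | zero => rfl
    | succ n ih => exact le_antisymm (measure_mono (hanti (Nat.zero_le _))) (ih ▸ hle n)
  have hlim := tendsto_measure_iInter_atTop hU hanti ⟨0, measure_ne_top μ _⟩
  rw [hempty, measure_empty, show ⇑μ ∘ U = fun _ => μ (U 0) from funext hconst] at hlim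
  exact tendsto_nhds_unique tendsto_const_nhds hlim

theorem measure_punctured_ball_eq_zero_of_contracting {E : Type*} [NormedAddCommGroup E]
    [MeasurableSpace E] [OpensMeasurableSpace E] {μ : Measure E} [IsFiniteMeasure μ] {f : E → E}
    {κ R : ℝ} (hκ0 : 0 < κ) (hκ1 : κ < 1) (hR : 0 ≤ R)
    (hmaps : MapsTo f (ball 0 R \ {0}) (ball 0 R \ {0}))
    (hcontr : ∀ x ∈ ball (0 : E) R, ‖f x‖ ≤ κ * ‖x‖)
    (hinv : ∀ A ⊆ ball 0 R \ {0}, MeasurableSet A → μ (f '' A) = μ A) :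
    μ (ball 0 R \ {0}) = 0 := by
  set U : ℕ → Set E := fun n => ball 0 (κ ^ n * R) \ {0}
  have hradius : Antitone fun n : ℕ => κ ^ n * R := fun m n hmn =>
    mul_le_mul_of_nonneg_right (pow_le_pow_of_le_one hκ0.le hκ1.le hmn) hR
  have hanti : Antitone U := fun m n hmn => sdiff_subset_sdiff_left (ball_subset_ball (hradius hmn))
  have hU : ∀ n, MeasurableSet (U n) := fun n => measurableSet_ball.diff (measurableSet_singleton 0)
  have hempty : ⋂ n, U n = ∅ := by
    refine eq_empty_of_forall_notMem fun x hx => ?_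
    have hx0 : 0 < ‖x‖ := norm_pos_iff.2 (mem_iInter.1 hx 0).2
    have hlim : Tendsto (fun n : ℕ => κ ^ n * R) atTop (𝓝 0) := by
      simpa using (tendsto_pow_atTop_nhds_zero_of_lt_one hκ0.le hκ1).mul_const R
    obtain ⟨n, hn⟩ := (hlim.eventually (gt_mem_nhds hx0)).exists
    exact (mem_ball_zero_iff.1 (mem_iInter.1 hx n).1).not_ge hn.le
  have himage : ∀ n, f '' U n ⊆ U (n + 1) := by
    rintro n _ ⟨x, ⟨hx, hx0⟩, rfl⟩
    have hxR : x ∈ ball (0 : E) R := by simpa [U] using (hanti (Nat.zero_le n) ⟨hx, hx0⟩).1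
    refine ⟨mem_ball_zero_iff.2 ?_, (hmaps ⟨hxR, hx0⟩).2⟩
    calc ‖f x‖ ≤ κ * ‖x‖ := hcontr x hxR
      _ < κ * (κ ^ n * R) := mul_lt_mul_of_pos_left (mem_ball_zero_iff.1 hx) hκ0
      _ = κ ^ (n + 1) * R := by ring
  have hle : ∀ n, μ (U n) ≤ μ (U (n + 1)) := fun n => by
    rw [← hinv (U n) ((hanti (Nat.zero_le n)).trans (by simp [U])) (hU n)]
    exact measure_mono (himage n)
  simpa [U] using measure_eq_zero_of_le_measure_succ (fun n => (hU n).nullMeasurableSet) hanti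
    hempty hle

theorem mapsTo_punctured_ball_of_injOn_of_norm_le {E : Type*} [NormedAddCommGroup E] {f : E → E}
    {κ R : ℝ} (hκ : κ ≤ 1) (hinj : InjOn f (ball 0 R)) (hf0 : f 0 = 0)
    (hcontr : ∀ x ∈ ball (0 : E) R, ‖f x‖ ≤ κ * ‖x‖) :
    MapsTo f (ball 0 R \ {0}) (ball 0 R \ {0}) := by
  rintro x ⟨hx, hx0⟩
  have hR : 0 < R := pos_of_mem_ball hx
  refine ⟨mem_ball_zero_iff.2 ?_, fun hfx => hx0 (hinj hx (mem_ball_self hR) (hfx.trans hf0.symm))⟩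
  calc ‖f x‖ ≤ κ * ‖x‖ := hcontr x hx
    _ ≤ ‖x‖ := mul_le_of_le_one_left (norm_nonneg x) hκ
    _ < R := mem_ball_zero_iff.1 hx

theorem tendsto_nhds_zero_of_norm_le_pow {E F : Type*} [SeminormedAddCommGroup E]
    [SeminormedAddCommGroup F] {ρ : E → F} {C : ℝ} {N : ℕ} (hN : N ≠ 0)
    (hρ : ∀ᶠ x in 𝓝 0, ‖ρ x‖ ≤ C * ‖x‖ ^ N) : Tendsto ρ (𝓝 0) (𝓝 0) := by
  refine squeeze_zero_norm' hρ ?_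
  simpa [hN] using ((continuous_norm.pow N).const_mul C).tendsto (0 : E)

section MulOneAdd

variable {𝕜 : Type*} [NontriviallyNormedField 𝕜] {f ρ : 𝕜 → 𝕜} {c : 𝕜}

theorem hasDerivAt_zero_of_eventuallyEq_mul_one_add (hf : ∀ᶠ x in 𝓝 0, f x = c * x * (1 + ρ x))
    (hρ : Tendsto ρ (𝓝 0) (𝓝 0)) : HasDerivAt f c 0 := by
  refine HasDerivAt.congr_of_eventuallyEq ?_ hf
  rw [hasDerivAt_iff_isLittleO]
  have hlo : (fun x => c * x * ρ x) =o[𝓝 0] fun x => x * 1 :=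
    (Asymptotics.isBigO_const_mul_self c id _).mul_isLittleO
      ((Asymptotics.isLittleO_one_iff 𝕜).2 hρ)
  simpa [mul_add, mul_comm] using hlo

theorem eventually_norm_le_mul_norm_of_eventuallyEq_mul_one_add
    (hf : ∀ᶠ x in 𝓝 0, f x = c * x * (1 + ρ x)) (hρ : Tendsto ρ (𝓝 0) (𝓝 0)) {κ : ℝ}
    (hκ : ‖c‖ < κ) : ∀ᶠ x in 𝓝 0, ‖f x‖ ≤ κ * ‖x‖ := by
  have hlim : Tendsto (fun x => ‖c * (1 + ρ x)‖) (𝓝 0) (𝓝 ‖c‖) := by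
    simpa using (((tendsto_const_nhds (x := 1)).add hρ).const_mul c).norm
  filter_upwards [hf, hlim.eventually_lt_const hκ] with x hfx hlt
  calc ‖f x‖ = ‖c * (1 + ρ x)‖ * ‖x‖ := by rw [hfx, mul_right_comm, norm_mul]
    _ ≤ κ * ‖x‖ := mul_le_mul_of_nonneg_right hlt.le (norm_nonneg x)

end MulOneAdd

theorem HasStrictDerivAt.exists_mem_nhds_injOn {𝕜 : Type*} [NontriviallyNormedField 𝕜]
    [CompleteSpace 𝕜] {f : 𝕜 → 𝕜} {f' a : 𝕜} (hf : HasStrictDerivAt f f' a) (hf' : f' ≠ 0) :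
    ∃ s ∈ 𝓝 a, InjOn f s :=
  have hF := hf.hasStrictFDerivAt_equiv hf'
  ⟨_, (hF.toOpenPartialHomeomorph f).open_source.mem_nhds hF.mem_toOpenPartialHomeomorph_source,
    (hF.toOpenPartialHomeomorph f).injOn⟩

theorem contracting_holonomy_no_invariant_measure_general
    (q : ℝ) (hq0 : 0 < q) (hq1 : q < 1)
    (N : ℕ) (hN : 1 ≤ N) (C : ℝ) (r : ℝ) (hr : 0 < r)
    (h ρ : ℂ → ℂ)
    (hhol : DifferentiableOn ℂ h (ball (0 : ℂ) r))
    (hform : ∀ x ∈ ball (0 : ℂ) r, h x = (q : ℂ) * x * (1 + ρ x))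
    (hρ : ∀ x ∈ ball (0 : ℂ) r, ‖ρ x‖ ≤ C * ‖x‖ ^ N) :
    ∃ r' : ℝ, 0 < r' ∧ r' ≤ r ∧
      Set.InjOn h (ball (0 : ℂ) r') ∧
      Set.MapsTo h (ball (0 : ℂ) r' \ {0}) (ball (0 : ℂ) r' \ {0}) ∧
      ∀ μ : Measure ℂ, IsFiniteMeasure μ →
        μ ((ball (0 : ℂ) r' \ {0})ᶜ) = 0 →
        (∀ A : Set ℂ, A ⊆ ball (0 : ℂ) r' \ {0} → MeasurableSet A →
          μ (h '' A) = μ A) →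
        μ = 0 := by
  have hr0 : ball (0 : ℂ) r ∈ 𝓝 0 := ball_mem_nhds 0 hr
  have hform' : ∀ᶠ x in 𝓝 0, h x = q * x * (1 + ρ x) := eventually_of_mem hr0 hform
  have hρ0 : Tendsto ρ (𝓝 0) (𝓝 0) :=
    tendsto_nhds_zero_of_norm_le_pow (by omega) (eventually_of_mem hr0 hρ)
  have hderiv := hasDerivAt_zero_of_eventuallyEq_mul_one_add hform' hρ0
  have hstrict : HasStrictDerivAt h q 0 := hderiv.deriv ▸ (hhol.analyticAt hr0).hasStrictDerivAt
  obtain ⟨s, hs, hinj⟩ := hstrict.exists_mem_nhds_injOn (Complex.ofReal_ne_zero.2 hq0.ne')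
  obtain ⟨κ, hqκ, hκ1⟩ := exists_between hq1
  have hcontr := eventually_norm_le_mul_norm_of_eventuallyEq_mul_one_add hform' hρ0
    (by simpa [abs_of_pos hq0] using hqκ)
  obtain ⟨ε, hε, hball⟩ := eventually_nhds_iff_ball.1 (hcontr.and hs)
  set r' := min ε r
  have hsub : ball (0 : ℂ) r' ⊆ ball 0 ε := ball_subset_ball (min_le_left ε r)
  have hinj' : InjOn h (ball 0 r') := hinj.mono fun x hx => (hball x (hsub hx)).2
  have hcontr' : ∀ x ∈ ball (0 : ℂ) r', ‖h x‖ ≤ κ * ‖x‖ := fun x hx => (hball x (hsub hx)).1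
  have hmaps := mapsTo_punctured_ball_of_injOn_of_norm_le hκ1.le hinj'
    (by simpa using hform 0 (mem_ball_self hr)) hcontr'
  refine ⟨r', lt_min hε hr, min_le_right ε r, hinj', hmaps, fun μ _ hnull hinv => ?_⟩
  have hS := measure_punctured_ball_eq_zero_of_contracting (hq0.trans hqκ) hκ1
    (lt_min hε hr).le hmaps hcontr' hinv
  exact Measure.measure_univ_eq_zero.1 (union_compl_self _ ▸ measure_union_null hS hnull)

/-- The contracting-holonomy argument of II.2.3 (case `λ ∈ ℝ(1)`): for a
holomorphic germ `h(x) = q·x·(1 + ρ(x))` with `0 < q < 1` and `|ρ(x)| ≤ C|x|^N`,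
there is a small disc on which `h` is injective, maps the punctured disc into
itself, and admits no nonzero finite invariant Borel measure on the punctured
disc. -/
theorem contracting_holonomy_no_invariant_measure
    (q : ℝ) (hq0 : 0 < q) (hq1 : q < 1)
    (N : ℕ) (hN : 1 ≤ N) (C : ℝ) (hC : 0 < C) (r : ℝ) (hr : 0 < r)
    (h ρ : ℂ → ℂ)
    (hhol : DifferentiableOn ℂ h (ball (0 : ℂ) r))
    (hform : ∀ x ∈ ball (0 : ℂ) r, h x = (q : ℂ) * x * (1 + ρ x))
    (hρ : ∀ x ∈ ball (0 : ℂ) r, ‖ρ x‖ ≤ C * ‖x‖ ^ N) :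
    ∃ r' : ℝ, 0 < r' ∧ r' ≤ r ∧
      Set.InjOn h (ball (0 : ℂ) r') ∧
      Set.MapsTo h (ball (0 : ℂ) r' \ {0}) (ball (0 : ℂ) r' \ {0}) ∧
      ∀ μ : Measure ℂ, IsFiniteMeasure μ →
        μ ((ball (0 : ℂ) r' \ {0})ᶜ) = 0 →
        (∀ A : Set ℂ, A ⊆ ball (0 : ℂ) r' \ {0} → MeasurableSet A →
          μ (h '' A) = μ A) →
        μ = 0 :=
  contracting_holonomy_no_invariant_measure_general q hq0 hq1 N hN C r hr h ρ hhol hform hρ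
end

section
/- Work in ℂ[[t]]. Let r ≥ 1 be an integer, β ∈ ℂ, and ν, λ ∈ ℂ \ {0}. Let a(t) = ν·t, and let b ∈ t·ℂ[[t]] satisfy b ≡ λ·t (mod t^{r+1}) and b ≡ λ·t + λβ·t^{r+1} (mod t^{r+2}). Then the commutator satisfies (a ∘ b ∘ a⁻¹) ∘ b⁻¹ ≡ t + β·λ^{−r}·(ν^{−r} − 1)·t^{r+1} (mod t^{r+2}). In particular, when ν^{r} ≠ 1 and β ≠ 0, the commutator of the linear map a with b is tangent to the identity to order exactly r, with explicitly computed leading coefficient. -/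
/-!
Conjugating `b = Σ bₖ tᵏ` by `a = ν t` multiplies `bₖ` by `ν^{1-k}`, so `a ∘ b ∘ a⁻¹` agrees
with `b` below degree `r + 1` and exceeds it by `(ν^{-r} - 1) λβ` in degree `r + 1`. Composition
is additive in its outer argument, so the commutator is `b ∘ b⁻¹ = t` plus that difference
composed with `b⁻¹`, which contributes `(ν^{-r} - 1) λβ · λ^{-(r+1)} t^{r+1}` modulo `t^{r+2}`.
-/

noncomputable def PSComp (f g : PowerSeries ℂ) : PowerSeries ℂ :=
  PowerSeries.mk fun n => ∑ k ∈ Finset.range (n + 1),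
    (PowerSeries.coeff k f) * (PowerSeries.coeff n (g ^ k))

open PowerSeries Finset

section PSComp

variable {f g h : PowerSeries ℂ}

@[simp]
lemma coeff_PSComp (f g : PowerSeries ℂ) (n : ℕ) :
    coeff n (PSComp f g) = ∑ k ∈ range (n + 1), coeff k f * coeff n (g ^ k) := by
  simp [PSComp]

lemma PSComp_sub_left (f f' g : PowerSeries ℂ) :
    PSComp (f - f') g = PSComp f g - PSComp f' g := by
  ext n
  simp [sub_mul]

lemma PSComp_C_mul_X_right (f : PowerSeries ℂ) (c : ℂ) :
    PSComp f (C c * X) = rescale c f := by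
  ext n
  rw [coeff_PSComp, coeff_rescale, sum_eq_single_of_mem n (self_mem_range_succ n)]
  · simp [mul_pow, ← map_pow, mul_comm]
  · intro k _ hkn
    simp [mul_pow, ← map_pow, coeff_X_pow, Ne.symm hkn]

lemma PSComp_C_mul_X_left (c : ℂ) (hg : constantCoeff g = 0) :
    PSComp (C c * X) g = C c * g := by
  ext n
  rcases Nat.eq_zero_or_pos n with rfl | hn
  · simp [hg]
  · rw [coeff_PSComp, sum_eq_single_of_mem 1 (mem_range.2 (by omega))]
    · simp
    · intro k _ hk1
      simp [coeff_X, hk1]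

lemma coeff_pow_self (hg : constantCoeff g = 0) (n : ℕ) : coeff n (g ^ n) = coeff 1 g ^ n := by
  obtain ⟨g', rfl⟩ := X_dvd_iff.2 hg
  simp [mul_pow, coeff_X_pow_mul', coeff_zero_eq_constantCoeff]

lemma coeff_PSComp_eq_zero_of_lt {m : ℕ} (hh : ∀ k < m, coeff k h = 0) {j : ℕ} (hj : j < m) :
    coeff j (PSComp h g) = 0 := by
  rw [coeff_PSComp]
  exact sum_eq_zero fun k hk => by rw [hh k ((mem_range.1 hk).trans_le hj), zero_mul]

lemma coeff_PSComp_of_forall_lt_eq_zero (hg : constantCoeff g = 0) {m : ℕ}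
    (hh : ∀ k < m, coeff k h = 0) :
    coeff m (PSComp h g) = coeff m h * coeff 1 g ^ m := by
  rw [coeff_PSComp, sum_range_succ, coeff_pow_self hg,
    sum_eq_zero fun k hk => by rw [hh k (mem_range.1 hk), zero_mul], zero_add]

lemma coeff_PSComp_of_coeff_eq_of_lt (hg : constantCoeff g = 0) {m : ℕ}
    (hfh : ∀ k < m, coeff k f = coeff k h) {j : ℕ} (hj : j ≤ m) :
    coeff j (PSComp f g) =
      coeff j (PSComp h g) + if j = m then (coeff m f - coeff m h) * coeff 1 g ^ m else 0 := by
  have hdiff : ∀ k < m, coeff k (f - h) = 0 := fun k hk => by rw [map_sub, hfh k hk, sub_self]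
  rw [← sub_eq_iff_eq_add', ← map_sub, ← PSComp_sub_left]
  rcases hj.lt_or_eq with hj | rfl
  · rw [coeff_PSComp_eq_zero_of_lt hdiff hj, if_neg hj.ne]
  · rw [coeff_PSComp_of_forall_lt_eq_zero hg hdiff, if_pos rfl, map_sub]

lemma coeff_PSComp_C_mul_X_conj (c : ℂ) (hg : constantCoeff g = 0) (k : ℕ) :
    coeff k (PSComp (PSComp (C c * X) g) (C c⁻¹ * X)) = c⁻¹ ^ k * c * coeff k g := by
  rw [PSComp_C_mul_X_right, PSComp_C_mul_X_left c hg, coeff_rescale, coeff_C_mul, mul_assoc]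

end PSComp

theorem commutator_with_linear_leading_coeff_general
    (r : ℕ) (hr : 1 ≤ r) (β : ℂ) (ν lam : ℂ) (hν : ν ≠ 0)
    (b : PowerSeries ℂ)
    (hb_mod1 : ∀ j < r + 1, PowerSeries.coeff j b =
      PowerSeries.coeff j (PowerSeries.C lam * PowerSeries.X))
    (hb_mod2 : ∀ j < r + 2, PowerSeries.coeff j b =
      PowerSeries.coeff j
        (PowerSeries.C lam * PowerSeries.X +
          PowerSeries.C (lam * β) * PowerSeries.X ^ (r + 1)))
    (binv : PowerSeries ℂ)
    (hbinv0 : PowerSeries.coeff 0 binv = 0)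
    (hinv₁ : PSComp b binv = PowerSeries.X) :
    ∀ j < r + 2,
      PowerSeries.coeff j
        (PSComp (PSComp (PSComp (PowerSeries.C ν * PowerSeries.X) b)
          (PowerSeries.C ν⁻¹ * PowerSeries.X)) binv) =
      PowerSeries.coeff j
        (PowerSeries.X +
          PowerSeries.C (β * lam⁻¹ ^ r * (ν⁻¹ ^ r - 1)) * PowerSeries.X ^ (r + 1)) := by
  intro j hj
  have hb0 : constantCoeff b = 0 := by simpa using hb_mod1 0 (by omega)
  have hbinv0' : constantCoeff binv = 0 := by simpa using hbinv0
  have hb1 : coeff 1 b = lam := by simpa using hb_mod1 1 (by omega)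
  have hbtop : coeff (r + 1) b = lam * β := by
    simpa [coeff_C, coeff_X_pow, mul_assoc, show r ≠ 0 by omega] using hb_mod2 (r + 1) (by omega)
  have hlam_binv : lam * coeff 1 binv = 1 := by
    have h := congrArg (coeff 1) hinv₁
    rwa [coeff_PSComp_of_forall_lt_eq_zero hbinv0' (m := 1) (by simpa using hb0), hb1, pow_one,
      coeff_one_X] at h
  have hconj := coeff_PSComp_C_mul_X_conj ν hb0
  have hconj_low : ∀ k < r + 1, coeff k (PSComp (PSComp (C ν * X) b) (C ν⁻¹ * X)) = coeff k b := by
    intro k hk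
    rw [hconj, hb_mod1 k hk, coeff_C_mul, coeff_X]
    split_ifs with hk1
    · simp [hk1, hν]
    · simp
  rw [coeff_PSComp_of_coeff_eq_of_lt hbinv0' hconj_low (Nat.lt_succ_iff.1 hj), hinv₁, map_add,
    coeff_C_mul, coeff_X_pow]
  congr 1
  split_ifs
  · rw [hconj, hbtop, ← eq_inv_of_mul_eq_one_right hlam_binv]
    linear_combination β * coeff 1 binv ^ r * ν⁻¹ ^ r * lam * coeff 1 binv * inv_mul_cancel₀ hν +
      β * coeff 1 binv ^ r * (ν⁻¹ ^ r - 1) * hlam_binv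
  · rw [mul_zero]

/-- IV.1.5/IV.2: for `a(t) = ν·t` and `b ≡ λ·t + λβ·t^{r+1} (mod t^{r+2})`, the
commutator satisfies
`(a ∘ b ∘ a⁻¹) ∘ b⁻¹ ≡ t + β·λ^{−r}·(ν^{−r} − 1)·t^{r+1} (mod t^{r+2})`. -/
theorem commutator_with_linear_leading_coeff
    (r : ℕ) (hr : 1 ≤ r) (β : ℂ) (ν lam : ℂ) (hν : ν ≠ 0) (hlam : lam ≠ 0)
    (b : PowerSeries ℂ)
    (hb_mod1 : ∀ j < r + 1, PowerSeries.coeff j b =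
      PowerSeries.coeff j (PowerSeries.C lam * PowerSeries.X))
    (hb_mod2 : ∀ j < r + 2, PowerSeries.coeff j b =
      PowerSeries.coeff j
        (PowerSeries.C lam * PowerSeries.X +
          PowerSeries.C (lam * β) * PowerSeries.X ^ (r + 1)))
    (binv : PowerSeries ℂ)
    (hbinv0 : PowerSeries.coeff 0 binv = 0)
    (hinv₁ : PSComp b binv = PowerSeries.X)
    (hinv₂ : PSComp binv b = PowerSeries.X) :
    ∀ j < r + 2,
      PowerSeries.coeff j
        (PSComp (PSComp (PSComp (PowerSeries.C ν * PowerSeries.X) b)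
          (PowerSeries.C ν⁻¹ * PowerSeries.X)) binv) =
      PowerSeries.coeff j
        (PowerSeries.X +
          PowerSeries.C (β * lam⁻¹ ^ r * (ν⁻¹ ^ r - 1)) * PowerSeries.X ^ (r + 1)) :=
  commutator_with_linear_leading_coeff_general r hr β ν lam hν b hb_mod1 hb_mod2 binv hbinv0 hinv₁
end

section
/- Let d ≥ 1 and let n_1, …, n_d be integers with n_i ≥ 2 for every i and n_j ≥ 3 for at least one j, and let λ_1, …, λ_d ∈ (0,1) be real numbers satisfying λ_{i+1}·(n_i − λ_i) = 1 for 1 ≤ i ≤ d (indices modulo d). Set u = λ_1λ_2⋯λ_d and let M = ℤ + ℤλ_1 be the additive subgroup of ℝ generated by 1 and λ_1. Then 0 < u < 1 and u·M = M; in particular multiplication by u is an automorphism of the group M, and the induced action of ℤ on M by powers of u is faithful. -/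
/-!
Solving the recurrence for `λ_i` gives `λ_i = n_i - 1/λ_{i+1}`, so `ℤ + ℤλ_i = λ_{i+1}⁻¹ (ℤ + ℤλ_{i+1})`:
multiplication by `λ_{i+1}` carries the module `ℤ + ℤλ_i` onto `ℤ + ℤλ_{i+1}`. Going once around the
cycle, multiplication by `u = λ_1 ⋯ λ_d` carries `ℤ + ℤλ_1` onto itself. Since `0 < u < 1`, no nonzero
power of `u` is `1`, and `u ^ k` acts trivially on `1 ∈ M` only for `k = 0`.
-/

open Finset

def intLattice {R : Type*} [Ring R] (x : R) : Set R :=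
  {y | ∃ a b : ℤ, y = a + b * x}

section CommRing

variable {R : Type*} [CommRing R]

theorem mul_image_intLattice {x y : R} {n : ℤ} (h : y * (n - x) = 1) :
    (y * ·) '' intLattice x = intLattice y := by
  ext z
  constructor
  · rintro ⟨_, ⟨a, b, rfl⟩, rfl⟩
    exact ⟨-b, a + b * n, by push_cast; linear_combination (-(b : R)) * h⟩
  · rintro ⟨a, b, rfl⟩
    exact ⟨_, ⟨a * n + b, -a, rfl⟩, by push_cast; linear_combination (a : R) * h⟩

theorem prod_mul_image_intLattice (x : ℕ → R) (n : ℕ → ℤ)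
    (h : ∀ k, x (k + 1) * (n k - x k) = 1) (k : ℕ) :
    ((∏ j ∈ range k, x (j + 1)) * ·) '' intLattice (x 0) = intLattice (x k) := by
  induction k with
  | zero => simp
  | succ k ih =>
    calc ((∏ j ∈ range (k + 1), x (j + 1)) * ·) '' intLattice (x 0)
        = (x (k + 1) * ·) '' (((∏ j ∈ range k, x (j + 1)) * ·) '' intLattice (x 0)) := by
          rw [prod_range_succ, Set.image_image]
          simp only [mul_left_comm, mul_comm]
      _ = intLattice (x (k + 1)) := by rw [ih, mul_image_intLattice (h k)]

end CommRing

theorem ZMod.prod_range_natCast_add {M : Type*} [CommMonoid M] {d : ℕ} [NeZero d]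
    (f : ZMod d → M) (c : ZMod d) :
    ∏ j ∈ range d, f ((j : ZMod d) + c) = ∏ i, f i := by
  rw [← Equiv.prod_comp (Equiv.addRight c) f]
  exact prod_bij' (fun j _ => (j : ZMod d)) (fun i _ => i.val)
    (fun _ _ => mem_univ _) (fun i _ => mem_range.2 (ZMod.val_lt i))
    (fun j hj => ZMod.val_cast_of_lt (mem_range.1 hj)) (fun i _ => ZMod.natCast_zmod_val i)
    (fun _ _ => rfl)

theorem cycle_prod_mul_image_intLattice {R : Type*} [CommRing R] {d : ℕ} [NeZero d]
    (lam : ZMod d → R) (n : ZMod d → ℤ) (hrec : ∀ i, lam (i + 1) * (n i - lam i) = 1)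
    (i : ZMod d) :
    ((∏ j, lam j) * ·) '' intLattice (lam i) = intLattice (lam i) := by
  have key := prod_mul_image_intLattice (fun k => lam (k + i)) (fun k => n (k + i))
    (fun k => by simpa only [Nat.cast_succ, add_right_comm] using hrec (k + i)) d
  simp only [Nat.cast_succ, add_assoc, ZMod.natCast_self, zero_add, Nat.cast_zero] at key
  rwa [ZMod.prod_range_natCast_add lam] at key

theorem cycle_acts_faithfully_on_module_general
    (d : ℕ) [NeZero d] (n : ZMod d → ℤ)
    (lam : ZMod d → ℝ)
    (hlam : ∀ i, lam i ∈ Set.Ioo (0 : ℝ) 1)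
    (hrec : ∀ i, lam (i + 1) * ((n i : ℝ) - lam i) = 1)
    (u : ℝ) (hu : u = ∏ i : ZMod d, lam i)
    (M : Set ℝ) (hM : M = {x : ℝ | ∃ a b : ℤ, x = (a : ℝ) + (b : ℝ) * lam 1}) :
    0 < u ∧ u < 1 ∧ (fun x => u * x) '' M = M ∧
      ∀ k : ℤ, (∀ x ∈ M, u ^ k * x = x) → k = 0 := by
  have hu_pos : 0 < u := hu ▸ prod_pos fun i _ => (hlam i).1
  have hu_lt_one : u < 1 := by
    rw [hu]
    calc ∏ i, lam i < ∏ _i : ZMod d, (1 : ℝ) :=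
          prod_lt_prod_of_nonempty (fun i _ => (hlam i).1) (fun i _ => (hlam i).2) univ_nonempty
      _ = 1 := prod_const_one
  refine ⟨hu_pos, hu_lt_one, hu ▸ hM ▸ cycle_prod_mul_image_intLattice lam n hrec 1, ?_⟩
  intro k hk
  have hone : u ^ k = 1 := by simpa using hk 1 (hM ▸ ⟨1, 0, by simp⟩)
  exact (zpow_eq_one_iff_right₀ hu_pos.le hu_lt_one.ne).1 hone

/-- Example I.4.2 (faithfulness): with `λ_i ∈ (0,1)` satisfying the cyclic
recurrence `λ_{i+1}(n_i − λ_i) = 1`, the product `u = λ_1⋯λ_d` lies in `(0,1)`,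
multiplication by `u` maps `M = ℤ + ℤλ_1` onto itself, and the induced `ℤ`-action
on `M` by powers of `u` is faithful. -/
theorem cycle_acts_faithfully_on_module
    (d : ℕ) [NeZero d] (n : ZMod d → ℤ)
    (hn2 : ∀ i, 2 ≤ n i) (hn3 : ∃ j, 3 ≤ n j)
    (lam : ZMod d → ℝ)
    (hlam : ∀ i, lam i ∈ Set.Ioo (0 : ℝ) 1)
    (hrec : ∀ i, lam (i + 1) * ((n i : ℝ) - lam i) = 1)
    (u : ℝ) (hu : u = ∏ i : ZMod d, lam i)
    (M : Set ℝ) (hM : M = {x : ℝ | ∃ a b : ℤ, x = (a : ℝ) + (b : ℝ) * lam 1}) :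
    0 < u ∧ u < 1 ∧ (fun x => u * x) '' M = M ∧
      ∀ k : ℤ, (∀ x ∈ M, u ^ k * x = x) → k = 0 :=
  cycle_acts_faithfully_on_module_general d n lam hlam hrec u hu M hM
end
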